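/- Let ι_X : A → X and f : Y → X be maps and let F = Y ×_X A be the homotopy pullback. Then secat(Y, F) ≤ n if and only if f factors up to homotopy through the n-th Ganea map g_n : G_n(ι_X) → X. -/

import Mathlib

open unitInterval

universe u

noncomputable section

/-- A continuous map is a homotopy equivalence. -/
def IsHEquiv {X Y : Type u} [TopologicalSpace X] [TopologicalSpace Y] (f : C(X, Y)) : Prop :=
  ∃ g : C(Y, X), (f.comp g).Homotopic (ContinuousMap.id Y) ∧
    (g.comp f).Homotopic (ContinuousMap.id X)

section HPO

variable {Z A B P : Type u} [TopologicalSpace Z] [TopologicalSpace A] [TopologicalSpace B]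
  [TopologicalSpace P]

/-- Gluing relation of the double mapping cylinder. -/
inductive HPORel (f : C(Z, A)) (g : C(Z, B)) :
    (A ⊕ ((Z × I) ⊕ B)) → (A ⊕ ((Z × I) ⊕ B)) → Prop
  | left (z : Z) : HPORel f g (Sum.inl (f z)) (Sum.inr (Sum.inl (z, 0)))
  | right (z : Z) : HPORel f g (Sum.inr (Sum.inl (z, 1))) (Sum.inr (Sum.inr (g z)))

/-- The double mapping cylinder (standard homotopy pushout) of `f : Z → A` and `g : Z → B`. -/
def HPO (f : C(Z, A)) (g : C(Z, B)) : Type u := Quot (HPORel f g)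

instance (f : C(Z, A)) (g : C(Z, B)) : TopologicalSpace (HPO f g) :=
  inferInstanceAs (TopologicalSpace (Quot _))

/-- Left structural map of the homotopy pushout. -/
def HPO.inl (f : C(Z, A)) (g : C(Z, B)) : C(A, HPO f g) :=
  ⟨fun a => Quot.mk _ (Sum.inl a), continuous_quot_mk.comp continuous_inl⟩

/-- Right structural map of the homotopy pushout. -/
def HPO.inr (f : C(Z, A)) (g : C(Z, B)) : C(B, HPO f g) :=
  ⟨fun b => Quot.mk _ (Sum.inr (Sum.inr b)),
    continuous_quot_mk.comp (continuous_inr.comp continuous_inr)⟩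

/-- Cylinder part of the homotopy pushout. -/
def HPO.cyl (f : C(Z, A)) (g : C(Z, B)) : C(Z × I, HPO f g) :=
  ⟨fun zt => Quot.mk _ (Sum.inr (Sum.inl zt)),
    continuous_quot_mk.comp (continuous_inr.comp continuous_inl)⟩

/-- The whisker map induced on the double mapping cylinder by a homotopy commutative square. -/
def HPO.desc (f : C(Z, A)) (g : C(Z, B)) (h : C(A, P)) (k : C(B, P))
    (H : ContinuousMap.Homotopy (h.comp f) (k.comp g)) : C(HPO f g, P) :=
  ⟨Quot.lift (Sum.elim h (Sum.elim (fun zt => H (zt.2, zt.1)) k))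
    (by
      rintro x y (⟨z⟩ | ⟨z⟩)
      · simp only [Sum.elim_inl, Sum.elim_inr]; exact (H.apply_zero z).symm
      · simp only [Sum.elim_inl, Sum.elim_inr]; exact H.apply_one z),
    continuous_quot_lift _ (by
      apply Continuous.sumElim h.continuous
      apply Continuous.sumElim _ k.continuous
      exact H.continuous.comp continuous_swap)⟩

/-- The square with legs `f, g` and cone maps `h, k` is a homotopy pushout. -/
def IsHPO (f : C(Z, A)) (g : C(Z, B)) (h : C(A, P)) (k : C(B, P)) : Prop :=
  ∃ H : ContinuousMap.Homotopy (h.comp f) (k.comp g), IsHEquiv (HPO.desc f g h k H)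

end HPO

section HPB

variable {A B X P : Type u} [TopologicalSpace A] [TopologicalSpace B] [TopologicalSpace X]
  [TopologicalSpace P]

/-- The standard homotopy pullback of `f : A → X` and `g : B → X`. -/
def HPB (f : C(A, X)) (g : C(B, X)) : Type u :=
  { p : A × C(I, X) × B // p.2.1 0 = f p.1 ∧ p.2.1 1 = g p.2.2 }

instance (f : C(A, X)) (g : C(B, X)) : TopologicalSpace (HPB f g) :=
  inferInstanceAs (TopologicalSpace (Subtype _))

/-- First projection of the homotopy pullback. -/
def HPB.fst (f : C(A, X)) (g : C(B, X)) : C(HPB f g, A) :=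
  ⟨fun p => p.1.1, continuous_fst.comp continuous_subtype_val⟩

/-- Second projection of the homotopy pullback. -/
def HPB.snd (f : C(A, X)) (g : C(B, X)) : C(HPB f g, B) :=
  ⟨fun p => p.1.2.2, continuous_snd.comp (continuous_snd.comp continuous_subtype_val)⟩

/-- The tautological homotopy over the homotopy pullback. -/
def HPB.pathHomotopy (f : C(A, X)) (g : C(B, X)) :
    ContinuousMap.Homotopy (g.comp (HPB.snd f g)) (f.comp (HPB.fst f g)) where
  toFun := fun q => q.2.1.2.1 (σ q.1)
  continuous_toFun := by
    have h1 : Continuous fun q : I × HPB f g => (q.2.1.2.1, σ q.1) := by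
      refine Continuous.prodMk ?_ (continuous_symm.comp continuous_fst)
      exact (continuous_fst.comp (continuous_snd.comp continuous_subtype_val)).comp continuous_snd
    exact ContinuousEval.continuous_eval.comp h1
  map_zero_left := fun p => by simp [HPB.snd, p.2.2]
  map_one_left := fun p => by simp [HPB.fst, p.2.1]

/-- The comparison (whisker) map into the homotopy pullback. -/
def HPB.lift (f : C(A, X)) (g : C(B, X)) (p : C(P, A)) (q : C(P, B))
    (H : ContinuousMap.Homotopy (f.comp p) (g.comp q)) : C(P, HPB f g) :=
  ⟨fun y => ⟨(p y, ((H.toContinuousMap.comp ⟨Prod.swap, continuous_swap⟩).curry y, q y)),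
      by simp⟩,
    by
      apply Continuous.subtype_mk
      exact p.continuous.prodMk
        (((H.toContinuousMap.comp ⟨Prod.swap, continuous_swap⟩).curry).continuous.prodMk
          q.continuous)⟩

/-- The square with cospan `f, g` and cone maps `p, q` is a homotopy pullback. -/
def IsHPB (f : C(A, X)) (g : C(B, X)) (p : C(P, A)) (q : C(P, B)) : Prop :=
  ∃ H : ContinuousMap.Homotopy (f.comp p) (g.comp q), IsHEquiv (HPB.lift f g p q H)

end HPB

/-- One step of the Ganea construction: a space over `X` under `A`. -/
structure GaneaStep (A X : Type u) [TopologicalSpace A] [TopologicalSpace X] where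
  G : Type u
  inst : TopologicalSpace G
  g : @ContinuousMap G X inst _
  α : @ContinuousMap A G _ inst

attribute [instance] GaneaStep.inst

/-- The Ganea construction of a map `ι : A → X`. -/
def ganea {A X : Type u} [TopologicalSpace A] [TopologicalSpace X] (ι : C(A, X)) :
    ℕ → GaneaStep A X
  | 0 => { G := A, inst := inferInstance, g := ι, α := ContinuousMap.id A }
  | n + 1 =>
    let s := ganea ι n
    { G := HPO (HPB.snd s.g ι) (HPB.fst s.g ι)
      inst := inferInstance
      g := HPO.desc (HPB.snd s.g ι) (HPB.fst s.g ι) ι s.g (HPB.pathHomotopy s.g ι)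
      α := HPO.inl (HPB.snd s.g ι) (HPB.fst s.g ι) }

/-- Least natural number (as `ℕ∞`) satisfying a predicate. -/
def theNat (P : ℕ → Prop) : ℕ∞ := sInf ((Nat.cast : ℕ → ℕ∞) '' { n | P n })

/-- `secat ι ≤ n` : the `n`-th Ganea map admits a homotopy section. -/
def secatLe {A X : Type u} [TopologicalSpace A] [TopologicalSpace X] (ι : C(A, X)) (n : ℕ) :
    Prop :=
  ∃ s : C(X, (ganea ι n).G), ((ganea ι n).g.comp s).Homotopic (ContinuousMap.id X)

/-- `relcat ι ≤ n` : the `n`-th Ganea map admits a homotopy section compatible with `α_n`. -/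
def relcatLe {A X : Type u} [TopologicalSpace A] [TopologicalSpace X] (ι : C(A, X)) (n : ℕ) :
    Prop :=
  ∃ s : C(X, (ganea ι n).G), ((ganea ι n).g.comp s).Homotopic (ContinuousMap.id X) ∧
    (s.comp ι).Homotopic (ganea ι n).α

/-- Sectional category (James), Ganea style. -/
def secat {A X : Type u} [TopologicalSpace A] [TopologicalSpace X] (ι : C(A, X)) : ℕ∞ :=
  theNat (secatLe ι)

/-- Relative category of a map. -/
def relcat {A X : Type u} [TopologicalSpace A] [TopologicalSpace X] (ι : C(A, X)) : ℕ∞ :=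
  theNat (relcatLe ι)

/-- `PushcatLe A X tX ι n` : `ι` is obtained from a homotopy equivalence by at most `n`
successive homotopy pushouts along maps to `A`. -/
inductive PushcatLe (A : Type u) [tA : TopologicalSpace A] :
    ∀ (X : Type u) (tX : TopologicalSpace X), @ContinuousMap A X tA tX → ℕ → Prop
  | equiv {X : Type u} [tX : TopologicalSpace X] (ι : C(A, X)) :
      IsHEquiv ι → PushcatLe A X tX ι 0
  | step {X X' Z : Type u} [tX : TopologicalSpace X] [tX' : TopologicalSpace X']
      [tZ : TopologicalSpace Z] {ι : C(A, X)} {n : ℕ} (h : PushcatLe A X tX ι n)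
      (ρ : C(Z, A)) (τ : C(Z, X)) (ι' : C(A, X')) (χ : C(X, X'))
      (hpo : IsHPO ρ τ ι' χ) (hχ : (χ.comp ι).Homotopic ι') :
      PushcatLe A X' tX' ι' (n + 1)
  | homotopic {X : Type u} [tX : TopologicalSpace X] {ι ι' : C(A, X)} {n : ℕ}
      (h : PushcatLe A X tX ι n) (hh : ι.Homotopic ι') : PushcatLe A X tX ι' n

/-- `RelcatLe` : as `PushcatLe`, with a compatible section at each step. -/
inductive RelcatLe (A : Type u) [tA : TopologicalSpace A] :
    ∀ (X : Type u) (tX : TopologicalSpace X), @ContinuousMap A X tA tX → ℕ → Prop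
  | equiv {X : Type u} [tX : TopologicalSpace X] (ι : C(A, X)) :
      IsHEquiv ι → RelcatLe A X tX ι 0
  | step {X X' Z : Type u} [tX : TopologicalSpace X] [tX' : TopologicalSpace X']
      [tZ : TopologicalSpace Z] {ι : C(A, X)} {n : ℕ} (h : RelcatLe A X tX ι n)
      (ρ : C(Z, A)) (τ : C(Z, X)) (ι' : C(A, X')) (χ : C(X, X'))
      (hpo : IsHPO ρ τ ι' χ) (hχ : (χ.comp ι).Homotopic ι')
      (σ₀ : C(A, Z)) (hσ : (ρ.comp σ₀).Homotopic (ContinuousMap.id A))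
      (hτσ : (τ.comp σ₀).Homotopic ι) :
      RelcatLe A X' tX' ι' (n + 1)
  | homotopic {X : Type u} [tX : TopologicalSpace X] {ι ι' : C(A, X)} {n : ℕ}
      (h : RelcatLe A X tX ι n) (hh : ι.Homotopic ι') : RelcatLe A X tX ι' n

/-- Strong pushout category of a map. -/
def Pushcat {A X : Type u} [tA : TopologicalSpace A] [tX : TopologicalSpace X]
    (ι : C(A, X)) : ℕ∞ :=
  theNat (fun n => PushcatLe A X tX ι n)

/-- Strong relative category of a map. -/
def Relcat {A X : Type u} [tA : TopologicalSpace A] [tX : TopologicalSpace X]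
    (ι : C(A, X)) : ℕ∞ :=
  theNat (fun n => RelcatLe A X tX ι n)

/-- Lusternik–Schnirelmann category (Ganea-normalized) of a pointed space. -/
def catP (X : Type u) [TopologicalSpace X] (x₀ : X) : ℕ∞ :=
  secat (ContinuousMap.const PUnit.{u + 1} x₀)

/-- Strong (Fox) category of a pointed space. -/
def CatP (X : Type u) [TopologicalSpace X] (x₀ : X) : ℕ∞ :=
  Relcat (ContinuousMap.const PUnit.{u + 1} x₀)

/-- `g : A → X` is the homotopy cofibre of `f : Y → A` (with cone point `x₀`). -/
def IsHCofiberPt {Y A X : Type u} [TopologicalSpace Y] [TopologicalSpace A] [TopologicalSpace X]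
    (f : C(Y, A)) (g : C(A, X)) (x₀ : X) : Prop :=
  IsHPO f (ContinuousMap.const Y (PUnit.unit : PUnit.{u + 1})) g
    (ContinuousMap.const PUnit.{u + 1} x₀)

/-- The diagonal map. -/
def diagMap (X : Type u) [TopologicalSpace X] : C(X, X × X) :=
  ⟨fun x => (x, x), continuous_id.prodMk continuous_id⟩

/-- Topological complexity (Farber, normalized). -/
def compl (X : Type u) [TopologicalSpace X] : ℕ∞ := secat (diagMap X)

/-- Strong complexity: strong relative category of the diagonal. -/
def Compl' (X : Type u) [TopologicalSpace X] : ℕ∞ := Relcat (diagMap X)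

end

/-!
If the Ganea map `g_m` of the pullback `p : F → Y` has a homotopy section for some `m ≤ n`,
pushing it forward along the map of Ganea constructions induced by the homotopy commutative
pullback square factors `f` through `g_m` of `ι_X`, and `g_m` factors through `g_n`.

Conversely, argue by induction on `n`. The space `G_{n+1}` is a double mapping cylinder whose
two ends `{coord ≠ 1}` and `{coord ≠ 0}` deform onto `A` and `G_n`. So if `f` factors through
`g_{n+1}` by `h`, the function `c = coord ∘ h` splits `Y` into the open sets `{c ≠ 1}` and
`{c ≠ 0}`, over which `f` factors through `ι_X` and through `g_n` respectively. Over these the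
pullback `p` has Ganea sections of level `0` and (by induction) `n`. Where both are defined,
they and their homotopies to the identity form a point of the homotopy pullback of `g_n` and `p`,
that is, of the cylinder of `G_{n+1}` of `p`; gluing along the collar of `c` gives a section of
level `n + 1`.
-/

open ContinuousMap

theorem theNat_le_iff (P : ℕ → Prop) (n : ℕ) : theNat P ≤ n ↔ ∃ m ≤ n, P m := by
  constructor
  · intro h
    rcases Set.eq_empty_or_nonempty ((Nat.cast : ℕ → ℕ∞) '' {m | P m}) with he | hne
    · simp [theNat, he] at h
    · obtain ⟨m, hm, hm'⟩ := csInf_mem hne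
      refine ⟨m, ?_, hm⟩
      rw [theNat, ← hm'] at h
      exact_mod_cast h
  · rintro ⟨m, hmn, hm⟩
    calc theNat P ≤ m := sInf_le ⟨m, hm, rfl⟩
      _ ≤ n := by exact_mod_cast hmn

namespace ContinuousMap.Homotopy

variable {X Y : Type*} [TopologicalSpace X] [TopologicalSpace Y] {f₀ f₁ f₂ f₃ : C(X, Y)}

theorem trans_apply_of_le (F : Homotopy f₀ f₁) (G : Homotopy f₁ f₂) {t s : I}
    (ht : (t : ℝ) ≤ 1 / 2) (hs : (s : ℝ) = 2 * t) (x : X) : F.trans G (t, x) = F (s, x) := by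
  rw [trans_apply, dif_pos ht]
  congr
  exact hs.symm

theorem trans_apply_of_ge (F : Homotopy f₀ f₁) (G : Homotopy f₁ f₂) {t s : I}
    (ht : 1 / 2 ≤ (t : ℝ)) (hs : (s : ℝ) = 2 * t - 1) (x : X) : F.trans G (t, x) = G (s, x) := by
  rw [trans_apply]
  split_ifs with h
  · have hs0 : s = 0 := Subtype.ext (by rw [hs]; push_cast; linarith)
    rw [hs0, G.apply_zero, ← F.apply_one]
    congr
    push_cast
    linarith
  · congr
    exact hs.symm

theorem trans_trans_apply_of_mid (F : Homotopy f₀ f₁) (G : Homotopy f₁ f₂) (K : Homotopy f₂ f₃)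
    {t s : I} (ht : 1 / 2 ≤ (t : ℝ)) (ht' : (t : ℝ) ≤ 3 / 4) (hs : (s : ℝ) = 4 * t - 2) (x : X) :
    F.trans (G.trans K) (t, x) = G (s, x) := by
  rw [trans_apply_of_ge F _ ht (s := ⟨2 * t - 1, by constructor <;> linarith [t.2.2]⟩) rfl,
    trans_apply_of_le G K (by push_cast; linarith) (by push_cast; linarith)]

theorem trans_trans_apply_of_ge (F : Homotopy f₀ f₁) (G : Homotopy f₁ f₂) (K : Homotopy f₂ f₃)
    {t s : I} (ht : 3 / 4 ≤ (t : ℝ)) (hs : (s : ℝ) = 4 * t - 3) (x : X) :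
    F.trans (G.trans K) (t, x) = K (s, x) := by
  rw [trans_apply_of_ge F _ (by linarith) (s := ⟨2 * t - 1, by constructor <;> linarith [t.2.2]⟩)
    rfl, trans_apply_of_ge G K (by push_cast; linarith) (by push_cast; linarith)]

end ContinuousMap.Homotopy

theorem continuousOn_sum_of_isOpen {α β γ : Type*} [TopologicalSpace α] [TopologicalSpace β]
    [TopologicalSpace γ] {φ : α ⊕ β → γ} {s : Set (α ⊕ β)} (hs : IsOpen s)
    (hl : ContinuousOn (φ ∘ Sum.inl) (Sum.inl ⁻¹' s))
    (hr : ContinuousOn (φ ∘ Sum.inr) (Sum.inr ⁻¹' s)) : ContinuousOn φ s := by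
  refine hs.continuousOn_iff.mpr ?_
  rintro (a | b) h
  · exact Topology.IsOpenEmbedding.inl.continuousAt_iff.mp
      (hl.continuousAt ((hs.preimage continuous_inl).mem_nhds h))
  · exact Topology.IsOpenEmbedding.inr.continuousAt_iff.mp
      (hr.continuousAt ((hs.preimage continuous_inr).mem_nhds h))

theorem continuousOn_of_eq_on_subtype {W T : Type*} [TopologicalSpace W] [TopologicalSpace T]
    {U V : Set W} (hVU : V ⊆ U) (F : C(U, T)) {G : W → T}
    (hG : ∀ w (hw : w ∈ V), G w = F ⟨w, hVU hw⟩) : ContinuousOn G V :=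
  continuousOn_iff_continuous_domRestrict.mpr
    ((F.continuous.comp (continuous_inclusion hVU)).congr fun w => (hG w w.2).symm)

namespace unitInterval

theorem ne_one_of_lt_third {t : I} (h : (t : ℝ) < 1 / 3) : t ≠ 1 := fun e => by
  rw [e] at h; norm_num at h

theorem ne_zero_of_gt_two_thirds {t : I} (h : 2 / 3 < (t : ℝ)) : t ≠ 0 := fun e => by
  rw [e] at h; norm_num at h

theorem ne_zero_and_ne_one_of_mid {t : I} (h₀ : ¬(t : ℝ) < 1 / 3) (h₂ : ¬2 / 3 < (t : ℝ)) :
    t ≠ 0 ∧ t ≠ 1 :=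
  ⟨fun e => h₀ (by rw [e]; norm_num), fun e => h₂ (by rw [e]; norm_num)⟩

end unitInterval

section CollarGlue

noncomputable def collar : C(I, I) :=
  ⟨fun t => Set.projIcc 0 1 zero_le_one (3 * t - 1), continuous_projIcc.comp (by fun_prop)⟩

theorem collar_of_le {t : I} (ht : (t : ℝ) ≤ 1 / 3) : collar t = 0 :=
  Set.projIcc_of_le_left zero_le_one (by linarith)

theorem collar_of_ge {t : I} (ht : 2 / 3 ≤ (t : ℝ)) : collar t = 1 :=
  Set.projIcc_of_right_le zero_le_one (by linarith)

variable {W T : Type*} [TopologicalSpace W] [TopologicalSpace T] (c : C(W, I))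

theorem mid_subset_ne_zero : {w | c w ≠ 0 ∧ c w ≠ 1} ⊆ {w | c w ≠ 0} :=
  fun _ hw => hw.1

theorem mid_subset_ne_one : {w | c w ≠ 0 ∧ c w ≠ 1} ⊆ {w | c w ≠ 1} :=
  fun _ hw => hw.2

theorem continuous_of_collar_cover {F : W → T} (h₀ : ContinuousOn F {w | (c w : ℝ) < 1 / 3})
    (h₁ : ContinuousOn F {w | c w ≠ 0 ∧ c w ≠ 1}) (h₂ : ContinuousOn F {w | 2 / 3 < (c w : ℝ)}) :
    Continuous F := by
  have hc : Continuous fun w => (c w : ℝ) := continuous_subtype_val.comp c.continuous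
  refine continuous_of_cover_nhds
    (s := ![{w | (c w : ℝ) < 1 / 3}, {w | c w ≠ 0 ∧ c w ≠ 1}, {w | 2 / 3 < (c w : ℝ)}])
    (fun w => ?_) (fun i => by fin_cases i <;> assumption)
  by_cases hlt : (c w : ℝ) < 1 / 3
  · exact ⟨0, (isOpen_lt hc continuous_const).mem_nhds hlt⟩
  by_cases hgt : 2 / 3 < (c w : ℝ)
  · exact ⟨2, (isOpen_lt continuous_const hc).mem_nhds hgt⟩
  exact ⟨1, ((isOpen_ne_fun c.continuous continuous_const).inter
    (isOpen_ne_fun c.continuous continuous_const)).mem_nhds (ne_zero_and_ne_one_of_mid hlt hgt)⟩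

noncomputable def collarGlue (F₀ : C({w | c w ≠ 1}, T)) (F₁ : C({w | c w ≠ 0 ∧ c w ≠ 1}, T))
    (F₂ : C({w | c w ≠ 0}, T))
    (h₀₁ : ∀ w (hw : c w ≠ 0 ∧ c w ≠ 1), (c w : ℝ) < 1 / 3 → F₁ ⟨w, hw⟩ = F₀ ⟨w, hw.2⟩)
    (h₁₂ : ∀ w (hw : c w ≠ 0 ∧ c w ≠ 1), 2 / 3 < (c w : ℝ) → F₁ ⟨w, hw⟩ = F₂ ⟨w, hw.1⟩) :
    C(W, T) where
  toFun w :=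
    if h₀ : (c w : ℝ) < 1 / 3 then F₀ ⟨w, ne_one_of_lt_third h₀⟩
    else if h₂ : 2 / 3 < (c w : ℝ) then F₂ ⟨w, ne_zero_of_gt_two_thirds h₂⟩
    else F₁ ⟨w, ne_zero_and_ne_one_of_mid h₀ h₂⟩
  continuous_toFun := by
    refine continuous_of_collar_cover c
      (continuousOn_of_eq_on_subtype (fun _ => ne_one_of_lt_third) F₀ fun w hw => dif_pos hw)
      (continuousOn_of_eq_on_subtype subset_rfl F₁ fun w hw => ?_)
      (continuousOn_of_eq_on_subtype (fun _ => ne_zero_of_gt_two_thirds) F₂ fun w hw => ?_)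
    · split_ifs with h₀ h₂
      exacts [(h₀₁ w hw h₀).symm, (h₁₂ w hw h₂).symm, rfl]
    · have hw : 2 / 3 < (c w : ℝ) := hw
      rw [dif_neg (by linarith), dif_pos hw]

variable {c} {F₀ : C({w | c w ≠ 1}, T)} {F₁ : C({w | c w ≠ 0 ∧ c w ≠ 1}, T)}
  {F₂ : C({w | c w ≠ 0}, T)}
  {h₀₁ : ∀ w (hw : c w ≠ 0 ∧ c w ≠ 1), (c w : ℝ) < 1 / 3 → F₁ ⟨w, hw⟩ = F₀ ⟨w, hw.2⟩}
  {h₁₂ : ∀ w (hw : c w ≠ 0 ∧ c w ≠ 1), 2 / 3 < (c w : ℝ) → F₁ ⟨w, hw⟩ = F₂ ⟨w, hw.1⟩}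

theorem collarGlue_of_lt {w : W} (h : (c w : ℝ) < 1 / 3) :
    collarGlue c F₀ F₁ F₂ h₀₁ h₁₂ w = F₀ ⟨w, ne_one_of_lt_third h⟩ :=
  dif_pos h

theorem collarGlue_of_gt {w : W} (h : 2 / 3 < (c w : ℝ)) :
    collarGlue c F₀ F₁ F₂ h₀₁ h₁₂ w = F₂ ⟨w, ne_zero_of_gt_two_thirds h⟩ :=
  (dif_neg (by linarith)).trans (dif_pos h)

theorem collarGlue_of_mem {w : W} (hw : c w ≠ 0 ∧ c w ≠ 1) :
    collarGlue c F₀ F₁ F₂ h₀₁ h₁₂ w = F₁ ⟨w, hw⟩ := by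
  change dite _ _ _ = _
  split_ifs with h₀ h₂
  exacts [(h₀₁ w hw h₀).symm, (h₁₂ w hw h₂).symm, rfl]

end CollarGlue

namespace HPO

variable {Z A B T : Type u} [TopologicalSpace Z] [TopologicalSpace A] [TopologicalSpace B]
  [TopologicalSpace T] (f : C(Z, A)) (g : C(Z, B))

@[elab_as_elim]
theorem ind {motive : HPO f g → Prop} (inl : ∀ a, motive (HPO.inl f g a))
    (cyl : ∀ zt, motive (HPO.cyl f g zt)) (inr : ∀ b, motive (HPO.inr f g b)) (w : HPO f g) :
    motive w := by
  induction w using Quot.ind with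
  | mk x => rcases x with a | zt | b; exacts [inl a, cyl zt, inr b]

theorem inl_eq_cyl (z : Z) : inl f g (f z) = cyl f g (z, 0) := Quot.sound (.left z)

theorem cyl_eq_inr (z : Z) : cyl f g (z, 1) = inr f g (g z) := Quot.sound (.right z)

def cylHomotopy : Homotopy ((inl f g).comp f) ((inr f g).comp g) where
  toFun p := cyl f g (p.2, p.1)
  continuous_toFun := (cyl f g).continuous.comp continuous_swap
  map_zero_left z := (inl_eq_cyl f g z).symm
  map_one_left z := cyl_eq_inr f g z

def coord : C(HPO f g, I) :=
  ⟨Quot.lift (Sum.elim (fun _ => 0) (Sum.elim Prod.snd fun _ => 1)) (by rintro _ _ (_ | _) <;> rfl),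
    continuous_quot_lift _ (continuous_const.sumElim (continuous_snd.sumElim continuous_const))⟩

theorem isOpen_coord_ne (t : I) : IsOpen {w | coord f g w ≠ t} :=
  isOpen_ne_fun (coord f g).continuous continuous_const

theorem continuousOn_of_cases {Φ : HPO f g → T} {U : Set (HPO f g)} (hU : IsOpen U)
    (hA : ContinuousOn (Φ ∘ inl f g) (inl f g ⁻¹' U))
    (hC : ContinuousOn (Φ ∘ cyl f g) (cyl f g ⁻¹' U))
    (hB : ContinuousOn (Φ ∘ inr f g) (inr f g ⁻¹' U)) : ContinuousOn Φ U :=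
  (isQuotientMap_quot_mk.continuousOn_isOpen_iff hU).mpr <|
    continuousOn_sum_of_isOpen (hU.preimage continuous_quot_mk) hA <|
      continuousOn_sum_of_isOpen ((hU.preimage continuous_quot_mk).preimage continuous_inr) hC hB

theorem homotopic_of_cases {F G : C(HPO f g, T)}
    (HA : Homotopy (F.comp (inl f g)) (G.comp (inl f g)))
    (HC : Homotopy (F.comp (cyl f g)) (G.comp (cyl f g)))
    (HB : Homotopy (F.comp (inr f g)) (G.comp (inr f g)))
    (h₀ : ∀ t z, HC (t, (z, 0)) = HA (t, f z)) (h₁ : ∀ t z, HC (t, (z, 1)) = HB (t, g z)) :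
    F.Homotopic G := by
  let path {X : Type u} [TopologicalSpace X] {φ ψ : C(X, T)} (H : Homotopy φ ψ) :
      C(X, C(I, T)) :=
    (H.toContinuousMap.comp prodSwap).curry
  have hK : ∀ x y, HPORel f g x y →
      Sum.elim (path HA) (Sum.elim (path HC) (path HB)) x =
        Sum.elim (path HA) (Sum.elim (path HC) (path HB)) y := by
    rintro _ _ (⟨z⟩ | ⟨z⟩) <;> ext t
    exacts [(h₀ t z).symm, h₁ t z]
  have hKc : Continuous (Quot.lift _ hK) := continuous_quot_lift _
    ((path HA).continuous.sumElim ((path HC).continuous.sumElim (path HB).continuous))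
  refine ⟨{ toFun := fun p => Quot.lift _ hK p.2 p.1,
             continuous_toFun :=
               continuous_eval.comp ((hKc.comp continuous_snd).prodMk continuous_fst),
             map_zero_left := fun w => ?_,
             map_one_left := fun w => ?_ }⟩
  · induction w using HPO.ind with
    | inl a => exact HA.apply_zero a
    | cyl zt => exact HC.apply_zero zt
    | inr b => exact HB.apply_zero b
  · induction w using HPO.ind with
    | inl a => exact HA.apply_one a
    | cyl zt => exact HC.apply_one zt
    | inr b => exact HB.apply_one b

def flip : C(HPO f g, HPO g f) := desc f g (inr g f) (inl g f) (cylHomotopy g f).symm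

theorem coord_flip (w : HPO f g) : coord g f (flip f g w) = σ (coord f g w) := by
  induction w using HPO.ind with
  | inl a => exact unitInterval.symm_zero.symm
  | cyl zt => rfl
  | inr b => exact unitInterval.symm_one.symm

theorem flip_flip (w : HPO f g) : flip g f (flip f g w) = w := by
  induction w using HPO.ind with
  | inl a => rfl
  | cyl zt => exact congrArg (fun s => cyl f g (zt.1, s)) (unitInterval.symm_symm zt.2)
  | inr b => rfl

/-- Outside the left end `{coord ≠ 1}` the value `a₀` is arbitrary. -/
noncomputable def leftProj (a₀ : A) : HPO f g → A :=
  Quot.lift (Sum.elim id (Sum.elim (fun zt => if zt.2 = 1 then a₀ else f zt.1) fun _ => a₀)) (by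
    rintro _ _ (⟨z⟩ | ⟨z⟩) <;> simp [(zero_ne_one : (0 : I) ≠ 1)])

theorem continuousOn_leftProj (a₀ : A) : ContinuousOn (leftProj f g a₀) {w | coord f g w ≠ 1} :=
  continuousOn_of_cases f g (isOpen_coord_ne f g 1) continuous_id.continuousOn
    ((f.continuous.comp continuous_fst).continuousOn.congr fun _ hzt => if_neg hzt)
    fun _ hb => (hb rfl).elim

def shrinkPath : C(Z × I, C(I, HPO f g)) :=
  ((cyl f g).comp ⟨fun p : (Z × I) × I => (p.1.1, σ p.2 * p.1.2), by fun_prop⟩).curry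

/-- Only the restriction to the left end `{coord ≠ 1}`, a deformation onto `A`, matters. -/
noncomputable def shrinkLeft : HPO f g → C(I, HPO f g) :=
  Quot.lift (Sum.elim (fun a => const _ (inl f g a))
      (Sum.elim (fun zt => if zt.2 = 1 then const _ (cyl f g zt) else shrinkPath f g zt)
        fun b => const _ (inr f g b))) (by
    rintro _ _ (⟨z⟩ | ⟨z⟩) <;> ext t
    · simp [(zero_ne_one : (0 : I) ≠ 1), shrinkPath, inl_eq_cyl]
    · simp [cyl_eq_inr])

theorem continuousOn_shrinkLeft : ContinuousOn (shrinkLeft f g) {w | coord f g w ≠ 1} :=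
  continuousOn_of_cases f g (isOpen_coord_ne f g 1)
    (ContinuousMap.const'.continuous.comp (inl f g).continuous).continuousOn
    ((shrinkPath f g).continuous.continuousOn.congr fun _ hzt => if_neg hzt)
    fun _ hb => (hb rfl).elim

theorem exists_retraction_left : ∃ r : C({w | coord f g w ≠ 1}, A),
    ((ContinuousMap.id _).restrict _).Homotopic ((inl f g).comp r) := by
  rcases isEmpty_or_nonempty A with hA | ⟨⟨a₀⟩⟩
  · have : IsEmpty {w | coord f g w ≠ 1} := ⟨fun ⟨w, hw⟩ => by
      induction w using HPO.ind with
      | inl a => exact isEmptyElim a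
      | cyl zt => exact isEmptyElim (f zt.1)
      | inr b => exact hw rfl⟩
    refine ⟨⟨isEmptyElim, continuous_of_discreteTopology⟩, ?_⟩
    rw [Subsingleton.elim ((inl f g).comp _) ((ContinuousMap.id _).restrict _)]
  refine ⟨⟨_, (continuousOn_leftProj f g a₀).domRestrict⟩, ⟨{
    toFun p := shrinkLeft f g p.2 p.1
    continuous_toFun := continuous_eval.comp
      (((continuousOn_shrinkLeft f g).domRestrict.comp continuous_snd).prodMk continuous_fst)
    map_zero_left := fun ⟨w, hw⟩ => ?_
    map_one_left := fun ⟨w, hw⟩ => ?_ }⟩⟩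
  · induction w using HPO.ind with
    | inl a => rfl
    | inr b => exact (hw rfl).elim
    | cyl zt =>
      change (if zt.2 = 1 then _ else shrinkPath f g zt) 0 = cyl f g zt
      rw [if_neg (show zt.2 ≠ 1 from hw)]
      change cyl f g (zt.1, σ 0 * zt.2) = cyl f g zt
      simp
  · induction w using HPO.ind with
    | inl a => rfl
    | inr b => exact (hw rfl).elim
    | cyl zt =>
      change (if zt.2 = 1 then _ else shrinkPath f g zt) 1 =
        inl f g (if zt.2 = 1 then a₀ else f zt.1)
      rw [if_neg (show zt.2 ≠ 1 from hw), if_neg (show zt.2 ≠ 1 from hw), inl_eq_cyl]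
      change cyl f g (zt.1, σ 1 * zt.2) = cyl f g (zt.1, 0)
      simp

theorem exists_retraction_right : ∃ r : C({w | coord f g w ≠ 0}, B),
    ((ContinuousMap.id _).restrict _).Homotopic ((inr f g).comp r) := by
  obtain ⟨r, hr⟩ := exists_retraction_left g f
  let φ : C({w | coord f g w ≠ 0}, {w | coord g f w ≠ 1}) :=
    ⟨fun w => ⟨flip f g w, fun h => w.2 <| by
      rw [← unitInterval.symm_symm (coord f g w), ← coord_flip, h, unitInterval.symm_one]⟩,
      by fun_prop⟩
  refine ⟨r.comp φ, ?_⟩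
  convert ((ContinuousMap.Homotopic.refl (flip g f)).comp hr).comp (.refl φ) using 1 <;> ext w
  · exact (flip_flip f g w).symm
  · rfl

end HPO

def ganeaStep {A X G : Type u} [TopologicalSpace A] [TopologicalSpace X] [TopologicalSpace G]
    (ι : C(A, X)) (gm : C(G, X)) : C(HPO (HPB.snd gm ι) (HPB.fst gm ι), X) :=
  HPO.desc _ _ ι gm (HPB.pathHomotopy gm ι)

section GaneaStepMap

variable {A₁ Y₁ A₂ Y₂ G₁ G₂ : Type u} [TopologicalSpace A₁] [TopologicalSpace Y₁]
  [TopologicalSpace A₂] [TopologicalSpace Y₂] [TopologicalSpace G₁] [TopologicalSpace G₂]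
  {ι₁ : C(A₁, Y₁)} {ι₂ : C(A₂, Y₂)} {α : C(A₁, A₂)} {β : C(Y₁, Y₂)}
  (Hsq : Homotopy (ι₂.comp α) (β.comp ι₁)) {gm₁ : C(G₁, Y₁)} {gm₂ : C(G₂, Y₂)}
  {Φ : C(G₁, G₂)} (HΦ : Homotopy (gm₂.comp Φ) (β.comp gm₁))

noncomputable def ganeaStepPath :
    Homotopy (gm₂.comp (Φ.comp (HPB.fst gm₁ ι₁))) (ι₂.comp (α.comp (HPB.snd gm₁ ι₁))) :=
  (HΦ.compContinuousMap _).trans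
    (((ContinuousMap.Homotopy.refl β).comp (HPB.pathHomotopy gm₁ ι₁).symm).trans
      (Hsq.symm.compContinuousMap _))

/-- `ganeaStepPath` traverses its three pieces on `[0, 1/2]`, `[1/2, 3/4]` and `[3/4, 1]`;
`ganeaStepReparam (r, s)` runs from `σ s` to the time `(3 - s) / 4` at which the middle piece
`β ∘ path` sits over the cylinder coordinate `s`. -/
noncomputable def ganeaStepReparam : C(I × I, I) :=
  ⟨fun p => ⟨(1 - p.1) * (1 - p.2) + p.1 * (3 - p.2) / 4, by
    constructor <;> nlinarith [p.1.2.1, p.1.2.2, p.2.2.1, p.2.2.2]⟩, by fun_prop⟩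

noncomputable def ganeaStepMap :
    C(HPO (HPB.snd gm₁ ι₁) (HPB.fst gm₁ ι₁), HPO (HPB.snd gm₂ ι₂) (HPB.fst gm₂ ι₂)) :=
  HPO.desc _ _ ((HPO.inl _ _).comp α) ((HPO.inr _ _).comp Φ)
    ((HPO.cylHomotopy _ _).compContinuousMap (HPB.lift gm₂ ι₂ _ _ (ganeaStepPath Hsq HΦ)))

noncomputable def ganeaStepCylHomotopy :
    Homotopy (((ganeaStep ι₂ gm₂).comp (ganeaStepMap Hsq HΦ)).comp (HPO.cyl _ _))
      ((β.comp (ganeaStep ι₁ gm₁)).comp (HPO.cyl _ _)) where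
  toFun p := ganeaStepPath Hsq HΦ (ganeaStepReparam (p.1, p.2.2), p.2.1)
  continuous_toFun := by fun_prop
  map_zero_left zs := by
    change ganeaStepPath Hsq HΦ (ganeaStepReparam (0, zs.2), zs.1) =
      ganeaStepPath Hsq HΦ (σ zs.2, zs.1)
    congr
    ext
    simp [ganeaStepReparam]
  map_one_left zs := by
    change ganeaStepPath Hsq HΦ (ganeaStepReparam (1, zs.2), zs.1) =
      β (HPB.pathHomotopy gm₁ ι₁ (zs.2, zs.1))
    rw [ganeaStepPath, Homotopy.trans_trans_apply_of_mid (s := σ zs.2)]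
    · simp
    all_goals simp [ganeaStepReparam]; linarith [zs.2.2.1, zs.2.2.2]

theorem ganeaStep_comp_ganeaStepMap_homotopic :
    ((ganeaStep ι₂ gm₂).comp (ganeaStepMap Hsq HΦ)).Homotopic (β.comp (ganeaStep ι₁ gm₁)) := by
  refine HPO.homotopic_of_cases _ _ Hsq (ganeaStepCylHomotopy Hsq HΦ) HΦ (fun t z => ?_)
    (fun t z => ?_)
  · change ganeaStepPath Hsq HΦ (ganeaStepReparam (t, 0), z) = Hsq (t, HPB.snd gm₁ ι₁ z)
    rw [ganeaStepPath, Homotopy.trans_trans_apply_of_ge (s := σ t)]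
    · simp
    all_goals simp [ganeaStepReparam]; linarith [t.2.1, t.2.2]
  · change ganeaStepPath Hsq HΦ (ganeaStepReparam (t, 1), z) = HΦ (t, HPB.fst gm₁ ι₁ z)
    rw [ganeaStepPath, Homotopy.trans_apply_of_le (s := t)]
    · rfl
    all_goals simp [ganeaStepReparam]; linarith [t.2.1, t.2.2]

end GaneaStepMap

section Ganea

variable {A X Y : Type u} [TopologicalSpace A] [TopologicalSpace X] [TopologicalSpace Y]

def FactorsThroughGanea (ι : C(A, X)) (n : ℕ) (f : C(Y, X)) : Prop :=
  ∃ h : C(Y, (ganea ι n).G), ((ganea ι n).g.comp h).Homotopic f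

theorem exists_ganea_map {A₂ X₂ : Type u} [TopologicalSpace A₂] [TopologicalSpace X₂]
    {ι : C(A, X)} {ι₂ : C(A₂, X₂)} {α : C(A, A₂)} {β : C(X, X₂)}
    (Hsq : (ι₂.comp α).Homotopic (β.comp ι)) (n : ℕ) :
    ∃ Φ : C((ganea ι n).G, (ganea ι₂ n).G),
      ((ganea ι₂ n).g.comp Φ).Homotopic (β.comp (ganea ι n).g) := by
  induction n with
  | zero => exact ⟨α, Hsq⟩
  | succ n ih =>
    obtain ⟨Φ, ⟨HΦ⟩⟩ := ih
    exact ⟨ganeaStepMap Hsq.some HΦ, ganeaStep_comp_ganeaStepMap_homotopic Hsq.some HΦ⟩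

namespace FactorsThroughGanea

variable {ι : C(A, X)} {n : ℕ} {f : C(Y, X)}

theorem succ (h : FactorsThroughGanea ι n f) : FactorsThroughGanea ι (n + 1) f :=
  let ⟨h, hh⟩ := h
  ⟨(HPO.inr _ _).comp h, hh⟩

theorem mono {m : ℕ} (h : FactorsThroughGanea ι m f) (hmn : m ≤ n) :
    FactorsThroughGanea ι n f := by
  induction n, hmn using Nat.le_induction with
  | base => exact h
  | succ n _ ih => exact ih.succ

theorem map {A₂ X₂ : Type u} [TopologicalSpace A₂] [TopologicalSpace X₂] {ι₂ : C(A₂, X₂)}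
    {α : C(A, A₂)} {β : C(X, X₂)} (Hsq : (ι₂.comp α).Homotopic (β.comp ι))
    (h : FactorsThroughGanea ι n f) : FactorsThroughGanea ι₂ n (β.comp f) := by
  obtain ⟨h, hh⟩ := h
  obtain ⟨Φ, hΦ⟩ := exists_ganea_map Hsq n
  exact ⟨Φ.comp h, (hΦ.comp (.refl h)).trans ((ContinuousMap.Homotopic.refl β).comp hh)⟩

theorem of_secatLe_fst_comp {U : Type u} [TopologicalSpace U] {i : C(U, Y)}
    (h : secatLe (HPB.fst (f.comp i) ι) n) : FactorsThroughGanea (HPB.fst f ι) n i := by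
  let incl := HPB.lift f ι (i.comp (HPB.fst _ _)) (HPB.snd _ _) (HPB.pathHomotopy (f.comp i) ι).symm
  simpa using map (α := incl) (β := i) (.refl _) h

theorem secatLe_fst_zero (h : FactorsThroughGanea ι 0 f) : secatLe (HPB.fst f ι) 0 :=
  let ⟨h, ⟨H⟩⟩ := h
  ⟨HPB.lift f ι (.id Y) h H.symm, .refl _⟩

theorem exists_cover (h : FactorsThroughGanea ι (n + 1) f) : ∃ c : C(Y, I),
    FactorsThroughGanea ι 0 (f.restrict {y | c y ≠ 1}) ∧
      FactorsThroughGanea ι n (f.restrict {y | c y ≠ 0}) := by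
  obtain ⟨h, hh⟩ := h
  let snd := HPB.snd (ganea ι n).g ι
  let fst := HPB.fst (ganea ι n).g ι
  let c := (HPO.coord snd fst).comp h
  refine ⟨c, ?_, ?_⟩
  · obtain ⟨r, hr⟩ := HPO.exists_retraction_left snd fst
    let h₀ : C({y | c y ≠ 1}, {w | HPO.coord snd fst w ≠ 1}) :=
      h.restrictPreimage {w | HPO.coord snd fst w ≠ 1}
    exact ⟨r.comp h₀, ((ContinuousMap.Homotopic.refl (ganeaStep ι (ganea ι n).g)).comp
      (hr.symm.comp (.refl h₀))).trans (hh.comp (.refl ((ContinuousMap.id Y).restrict _)))⟩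
  · obtain ⟨r, hr⟩ := HPO.exists_retraction_right snd fst
    let h₁ : C({y | c y ≠ 0}, {w | HPO.coord snd fst w ≠ 0}) :=
      h.restrictPreimage {w | HPO.coord snd fst w ≠ 0}
    exact ⟨r.comp h₁, ((ContinuousMap.Homotopic.refl (ganeaStep ι (ganea ι n).g)).comp
      (hr.symm.comp (.refl h₁))).trans (hh.comp (.refl ((ContinuousMap.id Y).restrict _)))⟩

end FactorsThroughGanea

end Ganea

section Gluing

variable {E W Y : Type u} [TopologicalSpace E] [TopologicalSpace W] [TopologicalSpace Y]
  {p : C(E, Y)} {n : ℕ} {j : C(W, Y)} {c : C(W, I)}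
  {σ₀ : C({w | c w ≠ 1}, (ganea p 0).G)} {σ₁ : C({w | c w ≠ 0}, (ganea p n).G)}
  (H₀ : Homotopy ((ganea p 0).g.comp σ₀) (j.restrict {w | c w ≠ 1}))
  (H₁ : Homotopy ((ganea p n).g.comp σ₁) (j.restrict {w | c w ≠ 0}))

noncomputable def gluePath :
    Homotopy
      ((ganea p n).g.comp (σ₁.comp (inclusion (mid_subset_ne_zero c))))
      ((ganea p 0).g.comp (σ₀.comp (inclusion (mid_subset_ne_one c)))) :=
  (H₁.compContinuousMap (inclusion (mid_subset_ne_zero c))).trans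
    (H₀.symm.compContinuousMap (inclusion (mid_subset_ne_one c)))

/-- `towardHalf (t, x)` moves `x` linearly to `1/2`, the time at which `gluePath` passes
through `j`. -/
noncomputable def towardHalf : C(I × I, I) :=
  ⟨fun q => ⟨(1 - q.1) * q.2 + q.1 / 2, by
    constructor <;> nlinarith [q.1.2.1, q.1.2.2, q.2.2.1, q.2.2.2]⟩, by fun_prop⟩

noncomputable def glueHPB : C({w | c w ≠ 0 ∧ c w ≠ 1}, HPB (ganea p n).g p) :=
  HPB.lift (ganea p n).g p _ _ (gluePath H₀ H₁)

noncomputable def glueSection : C(W, HPO (HPB.snd (ganea p n).g p) (HPB.fst (ganea p n).g p)) :=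
  collarGlue c ((HPO.inl _ _).comp σ₀)
    ((HPO.cyl _ _).comp ((glueHPB H₀ H₁).prodMk (collar.comp (c.restrict _))))
    ((HPO.inr _ _).comp σ₁)
    (fun w hw hlt => by
      change HPO.cyl _ _ (glueHPB H₀ H₁ ⟨w, hw⟩, collar (c w)) = _
      rw [collar_of_le hlt.le, ← HPO.inl_eq_cyl]
      rfl)
    (fun w hw hgt => by
      change HPO.cyl _ _ (glueHPB H₀ H₁ ⟨w, hw⟩, collar (c w)) = _
      rw [collar_of_ge hgt.le, HPO.cyl_eq_inr]
      rfl)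

noncomputable def glueHomotopyMap : C(I × W, Y) :=
  collarGlue (c.comp .snd)
    (H₀.toContinuousMap.comp ⟨fun q => (q.1.1, ⟨q.1.2, show c q.1.2 ≠ 1 from q.2⟩), by fun_prop⟩)
    ((gluePath H₀ H₁).toContinuousMap.comp
      ⟨fun q => (towardHalf (q.1.1, σ (collar (c q.1.2))),
        ⟨q.1.2, show c q.1.2 ≠ 0 ∧ c q.1.2 ≠ 1 from q.2⟩), by fun_prop⟩)
    (H₁.toContinuousMap.comp ⟨fun q => (q.1.1, ⟨q.1.2, show c q.1.2 ≠ 0 from q.2⟩), by fun_prop⟩)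
    (fun q hq hlt => by
      change gluePath H₀ H₁ (towardHalf (q.1, σ (collar (c q.2))), ⟨q.2, hq⟩) =
        H₀ (q.1, ⟨q.2, hq.2⟩)
      replace hlt : (c q.2 : ℝ) < 1 / 3 := hlt
      rw [collar_of_le hlt.le, unitInterval.symm_zero]
      erw [Homotopy.trans_apply_of_ge (s := σ q.1)]
      · change H₀.symm (σ q.1, _) = _
        rw [Homotopy.symm_apply, unitInterval.symm_symm]
        rfl
      all_goals simp [towardHalf]; linarith [q.1.2.1, q.1.2.2])
    (fun q hq hgt => by
      change gluePath H₀ H₁ (towardHalf (q.1, σ (collar (c q.2))), ⟨q.2, hq⟩) =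
        H₁ (q.1, ⟨q.2, hq.1⟩)
      replace hgt : 2 / 3 < (c q.2 : ℝ) := hgt
      rw [collar_of_ge hgt.le, unitInterval.symm_one]
      erw [Homotopy.trans_apply_of_le (s := q.1)]
      · rfl
      all_goals simp [towardHalf]; linarith [q.1.2.1, q.1.2.2])

noncomputable def glueHomotopy : Homotopy ((ganea p (n + 1)).g.comp (glueSection H₀ H₁)) j where
  toFun := glueHomotopyMap H₀ H₁
  map_zero_left w := by
    change glueHomotopyMap H₀ H₁ (0, w) = ganeaStep p (ganea p n).g (glueSection H₀ H₁ w)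
    unfold glueHomotopyMap glueSection
    by_cases h₀ : (c w : ℝ) < 1 / 3
    · rw [collarGlue_of_lt h₀, collarGlue_of_lt (c := c.comp .snd) h₀]
      exact H₀.apply_zero _
    by_cases h₂ : 2 / 3 < (c w : ℝ)
    · rw [collarGlue_of_gt h₂, collarGlue_of_gt (c := c.comp .snd) h₂]
      exact H₁.apply_zero _
    have hm := ne_zero_and_ne_one_of_mid h₀ h₂
    rw [collarGlue_of_mem hm, collarGlue_of_mem (c := c.comp .snd) hm]
    change gluePath H₀ H₁ (towardHalf (0, _), _) = gluePath H₀ H₁ (_, _)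
    congr
    ext
    simp [towardHalf]
  map_one_left w := by
    unfold glueHomotopyMap
    by_cases h₀ : (c w : ℝ) < 1 / 3
    · rw [collarGlue_of_lt (c := c.comp .snd) h₀]
      exact H₀.apply_one _
    by_cases h₂ : 2 / 3 < (c w : ℝ)
    · rw [collarGlue_of_gt (c := c.comp .snd) h₂]
      exact H₁.apply_one _
    rw [collarGlue_of_mem (c := c.comp .snd) (ne_zero_and_ne_one_of_mid h₀ h₂)]
    change gluePath H₀ H₁ (towardHalf (1, _), _) = _
    erw [Homotopy.trans_apply_of_le (s := 1)]
    · exact H₁.apply_one _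
    all_goals simp [towardHalf]

end Gluing

theorem FactorsThroughGanea.succ_of_cover {E W Y : Type u} [TopologicalSpace E]
    [TopologicalSpace W] [TopologicalSpace Y] {p : C(E, Y)} {n : ℕ} {j : C(W, Y)} (c : C(W, I))
    (h₀ : FactorsThroughGanea p 0 (j.restrict {w | c w ≠ 1}))
    (h₁ : FactorsThroughGanea p n (j.restrict {w | c w ≠ 0})) :
    FactorsThroughGanea p (n + 1) j :=
  let ⟨_, ⟨H₀⟩⟩ := h₀
  let ⟨_, ⟨H₁⟩⟩ := h₁
  ⟨glueSection H₀ H₁, ⟨glueHomotopy H₀ H₁⟩⟩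

theorem FactorsThroughGanea.secatLe_fst {A X Y : Type u} [TopologicalSpace A]
    [TopologicalSpace X] [TopologicalSpace Y] {ι : C(A, X)} {n : ℕ} {f : C(Y, X)}
    (h : FactorsThroughGanea ι n f) : secatLe (HPB.fst f ι) n := by
  induction n generalizing Y with
  | zero => exact h.secatLe_fst_zero
  | succ n ih =>
    obtain ⟨c, h₀, h₁⟩ := h.exists_cover
    exact succ_of_cover c
      (.of_secatLe_fst_comp (f := f) (i := (ContinuousMap.id Y).restrict _) h₀.secatLe_fst_zero)
      (.of_secatLe_fst_comp (f := f) (i := (ContinuousMap.id Y).restrict _) (ih h₁))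

/-- Schwarz's characterization of sectional category via the Ganea fibrations. -/
theorem secat_pullback_le_iff_factors {A X Y : Type u} [TopologicalSpace A]
    [TopologicalSpace X] [TopologicalSpace Y] (ιX : C(A, X)) (f : C(Y, X)) (n : ℕ) :
    secat (HPB.fst f ιX) ≤ (n : ℕ∞) ↔
      ∃ h : C(Y, (ganea ιX n).G), ((ganea ιX n).g.comp h).Homotopic f := by
  rw [secat, theNat_le_iff]
  constructor
  · rintro ⟨m, hmn, hm⟩
    exact (FactorsThroughGanea.map ⟨HPB.pathHomotopy f ιX⟩ hm).mono hmn
  · exact fun h => ⟨n, le_rfl, FactorsThroughGanea.secatLe_fst h⟩
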